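/- arXiv:1901.07020 — 2 statements merged into one kernel-verified Lean document; each statement's English description precedes it below -/
import Mathlib

section
/- Let R = ℤ[F_1,…,F_n, X_1,…,X_n, Y_1,…,Y_n]/I, where I is the ideal generated by the n elements X_i·Y_i − F_i·X_{i+1}^{1−d_i} − F_{i+1}^{1−d_i}·X_{i−1}·X_{i+1}^{d_i} for 1 ≤ i ≤ n (with conventions X_0 = X_{n+1} = F_{n+1} = 1). Then R is spanned, as a module over the image of ℤ[F_1,…,F_n], by the images of the monomials ∏_{i=1}^n X_i^{p_i}·Y_i^{m_i} with p_i·m_i = 0 for all i (i.e. monomials in the X_i and Y_i not involving any product X_i·Y_i). -/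
open Finset

noncomputable section

/-- `i_◇`: for `i ≤ n-2`, the minimal `k ∈ [i,n]` with `ξ k = ξ (k+2)`;
`(n-1)_◇ = n-1` and `n_◇ = n`. -/
def diam (n : ℕ) (ξ : ℕ → ℤ) (i : ℕ) : ℕ :=
  if n - 1 ≤ i then i else sInf {k | i ≤ k ∧ k ≤ n ∧ ξ k = ξ (k + 2)}

/-- `d_m = 1` iff `m = m_◇` (with the convention `d_0 = 1`). -/
def dd (n : ℕ) (ξ : ℕ → ℤ) (m : ℕ) : ℕ :=
  if m = 0 ∨ diam n ξ m = m then 1 else 0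

/-- `j_•`: `1_• = 0`, `2_• = 1` and, for `j > 2`, the largest `m < j` with `m = 1` or `m = m_◇`. -/
def bul (n : ℕ) (ξ : ℕ → ℤ) (j : ℕ) : ℕ :=
  if j ≤ 1 then 0 else sSup {m | m < j ∧ (m = 1 ∨ diam n ξ m = m)}

/-- The polynomial ring `ℤ[F_1,…,F_n, X_1,…,X_n, Y_1,…,Y_n]`. -/
abbrev P7 (n : ℕ) := MvPolynomial (Fin n ⊕ Fin n ⊕ Fin n) ℤ

/-- `F_m` (with `F_{n+1} = 1`). -/
noncomputable def F7 (n : ℕ) (m : ℕ) : P7 n :=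
  if h : 1 ≤ m ∧ m ≤ n then MvPolynomial.X (Sum.inl ⟨m - 1, by omega⟩) else 1

/-- `X_m` (with `X_0 = X_{n+1} = 1`). -/
noncomputable def X7 (n : ℕ) (m : ℕ) : P7 n :=
  if h : 1 ≤ m ∧ m ≤ n then MvPolynomial.X (Sum.inr (Sum.inl ⟨m - 1, by omega⟩)) else 1

/-- `Y_m`. -/
noncomputable def Y7 (n : ℕ) (m : ℕ) : P7 n :=
  if h : 1 ≤ m ∧ m ≤ n then MvPolynomial.X (Sum.inr (Sum.inr ⟨m - 1, by omega⟩)) else 1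

/-- The ideal `I` generated by `X_i Y_i - F_i X_{i+1}^{1-d_i} - F_{i+1}^{1-d_i} X_{i-1} X_{i+1}^{d_i}`. -/
noncomputable def I7 (n : ℕ) (ξ : ℕ → ℤ) : Ideal (P7 n) :=
  Ideal.span {p | ∃ i, 1 ≤ i ∧ i ≤ n ∧
    p = X7 n i * Y7 n i - F7 n i * X7 n (i + 1) ^ (1 - dd n ξ i)
        - F7 n (i + 1) ^ (1 - dd n ξ i) * X7 n (i - 1) * X7 n (i + 1) ^ dd n ξ i}

/-!
Each defining relation writes `X_i Y_i` as an `ℤ[F]`-combination of monomials in the `X_j`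
alone (with `X_0 = X_{n+1} = 1`). Hence in any monomial `∏ X_i^{p_i} Y_i^{m_i}` with some
`p_i m_i ≠ 0`, replacing one factor `X_i Y_i` strictly lowers the total `Y`-degree, and induction
on that degree reduces every monomial. Monomials span `R` over `ℤ[F]` because `R` is generated
by the `X_i`, `Y_i` and `F_i`.
-/

section Bimonomial

variable {ι R S : Type*} [CommRing R] [CommRing S] [Algebra R S] (s : Finset ι) (x y : ι → S)

def bimonomial (p m : ι → ℕ) : S := ∏ i ∈ s, x i ^ p i * y i ^ m i

def reducedBimonomials : Set S :=
  {r | ∃ p m : ι → ℕ, (∀ i, p i * m i = 0) ∧ r = bimonomial s x y p m}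

lemma bimonomial_zero : bimonomial s x y 0 0 = 1 := by
  simp [bimonomial]

lemma bimonomial_add (p m p' m' : ι → ℕ) :
    bimonomial s x y (p + p') (m + m') = bimonomial s x y p m * bimonomial s x y p' m' := by
  simp only [bimonomial, ← prod_mul_distrib, Pi.add_apply, pow_add]
  exact prod_congr rfl fun _ _ => by ring

lemma bimonomial_single [DecidableEq ι] (i : ι) (a b : ℕ) :
    bimonomial s x y (Pi.single i a) (Pi.single i b) = if i ∈ s then x i ^ a * y i ^ b else 1 := by
  rw [bimonomial, ← prod_ite_eq' s i fun j => x j ^ a * y j ^ b]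
  refine prod_congr rfl fun j _ => ?_
  by_cases hj : j = i
  · subst hj; simp
  · simp [hj]

lemma bimonomial_mem_reducedBimonomials {p m : ι → ℕ} (h : ∀ i ∈ s, p i * m i = 0) :
    bimonomial s x y p m ∈ reducedBimonomials s x y := by
  classical
  refine ⟨fun i => if i ∈ s then p i else 0, fun i => if i ∈ s then m i else 0,
    fun i => ?_, prod_congr rfl fun i hi => by simp [hi]⟩
  by_cases hi : i ∈ s <;> simp [hi, h]

lemma bimonomial_mem_span_reducedBimonomials
    (hrel : ∀ i ∈ s, x i * y i ∈ Submodule.span R (Set.range fun q => bimonomial s x y q 0))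
    (p m : ι → ℕ) : bimonomial s x y p m ∈ Submodule.span R (reducedBimonomials s x y) := by
  classical
  induction hN : ∑ i ∈ s, m i using Nat.strong_induction_on generalizing p m with
  | _ N ih =>
    by_cases hred : ∀ i ∈ s, p i * m i = 0
    · exact Submodule.subset_span (bimonomial_mem_reducedBimonomials s x y hred)
    push Not at hred
    obtain ⟨i, hi, hpm⟩ := hred
    have split : ∀ q : ι → ℕ, q i ≠ 0 → Pi.single i 1 + (q - Pi.single i 1) = q := fun q hq => by
      ext j; by_cases hj : j = i
      · subst hj; simp; omega
      · simp [hj]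
    set m' := m - Pi.single i 1
    have hlt : ∑ j ∈ s, m' j < N := by
      rw [← hN]
      refine sum_lt_sum (fun j _ => Nat.sub_le _ _) ⟨i, hi, ?_⟩
      have := right_ne_zero_of_mul hpm
      simp only [m', Pi.sub_apply, Pi.single_eq_same]
      omega
    rw [← split p (left_ne_zero_of_mul hpm), ← split m (right_ne_zero_of_mul hpm),
      bimonomial_add, bimonomial_single, if_pos hi, pow_one, pow_one]
    suffices Submodule.span R (Set.range fun q => bimonomial s x y q 0) ≤
        (Submodule.span R (reducedBimonomials s x y)).comap
          (LinearMap.mulRight R (bimonomial s x y (p - Pi.single i 1) m')) from this (hrel i hi)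
    rw [Submodule.span_le]
    rintro _ ⟨q, rfl⟩
    simpa [← bimonomial_add] using ih _ hlt (q + (p - Pi.single i 1)) m' rfl

lemma adjoin_le_span_bimonomial :
    Subalgebra.toSubmodule (Algebra.adjoin R (x '' s ∪ y '' s)) ≤
      Submodule.span R (Set.range fun pm : (ι → ℕ) × (ι → ℕ) => bimonomial s x y pm.1 pm.2) := by
  classical
  rw [Algebra.adjoin_eq_span]
  refine Submodule.span_mono fun z hz => ?_
  induction hz using Submonoid.closure_induction with
  | mem z hz =>
    rcases hz with ⟨i, hi, rfl⟩ | ⟨i, hi, rfl⟩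
    · exact ⟨(Pi.single i 1, Pi.single i 0),
        (bimonomial_single s x y i 1 0).trans (by simp [mem_coe.mp hi])⟩
    · exact ⟨(Pi.single i 0, Pi.single i 1),
        (bimonomial_single s x y i 0 1).trans (by simp [mem_coe.mp hi])⟩
  | one => exact ⟨(0, 0), bimonomial_zero s x y⟩
  | mul _ _ _ _ h h' =>
    obtain ⟨⟨p, m⟩, rfl⟩ := h
    obtain ⟨⟨p', m'⟩, rfl⟩ := h'
    exact ⟨(p + p', m + m'), bimonomial_add s x y p m p' m'⟩

theorem span_reducedBimonomials_eq_top (hgen : Algebra.adjoin R (x '' s ∪ y '' s) = ⊤)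
    (hrel : ∀ i ∈ s, x i * y i ∈ Submodule.span R (Set.range fun q => bimonomial s x y q 0)) :
    Submodule.span R (reducedBimonomials s x y) = ⊤ := by
  rw [eq_top_iff, ← Algebra.top_toSubmodule, ← hgen]
  refine (adjoin_le_span_bimonomial s x y).trans (Submodule.span_le.mpr ?_)
  rintro _ ⟨⟨p, m⟩, rfl⟩
  exact bimonomial_mem_span_reducedBimonomials s x y hrel p m

end Bimonomial

section QuotientRing

variable (n : ℕ) (ξ : ℕ → ℤ)

local notation "π" => Ideal.Quotient.mk (I7 n ξ)

abbrev baseSubalgebra : Subalgebra ℤ (P7 n ⧸ I7 n ξ) :=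
  Algebra.adjoin ℤ {r | ∃ i, 1 ≤ i ∧ i ≤ n ∧ r = π (F7 n i)}

lemma F7_succ (j : Fin n) : F7 n (j + 1) = MvPolynomial.X (Sum.inl j) := by
  simp [F7, Nat.succ_le_of_lt j.isLt]

lemma X7_succ (j : Fin n) : X7 n (j + 1) = MvPolynomial.X (Sum.inr (Sum.inl j)) := by
  simp [X7, Nat.succ_le_of_lt j.isLt]

lemma Y7_succ (j : Fin n) : Y7 n (j + 1) = MvPolynomial.X (Sum.inr (Sum.inr j)) := by
  simp [Y7, Nat.succ_le_of_lt j.isLt]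

lemma mk_F7_mem_baseSubalgebra (i : ℕ) : π (F7 n i) ∈ baseSubalgebra n ξ := by
  by_cases hi : 1 ≤ i ∧ i ≤ n
  · exact Algebra.subset_adjoin ⟨i, hi.1, hi.2, rfl⟩
  · simp [F7, hi]

-- Also for `k = 0` and `k = n + 1`, where `X7 n k = 1`.
lemma mk_X7_pow (k e : ℕ) :
    π (X7 n k) ^ e = bimonomial (Icc 1 n) (fun k => π (X7 n k)) (fun k => π (Y7 n k))
      (Pi.single k e) 0 := by
  rw [← Pi.single_zero k, bimonomial_single]
  by_cases hk : 1 ≤ k ∧ k ≤ n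
  · simp [hk]
  · simp [hk, X7]

lemma mk_X7_mul_Y7 {i : ℕ} (h1 : 1 ≤ i) (h2 : i ≤ n) :
    π (X7 n i * Y7 n i) = π (F7 n i * X7 n (i + 1) ^ (1 - dd n ξ i))
        + π (F7 n (i + 1) ^ (1 - dd n ξ i) * X7 n (i - 1) * X7 n (i + 1) ^ dd n ξ i) := by
  rw [← sub_eq_zero, ← map_add, ← map_sub, sub_add_eq_sub_sub, Ideal.Quotient.eq_zero_iff_mem]
  exact Ideal.subset_span ⟨i, h1, h2, rfl⟩

lemma mk_X7_mul_mk_Y7_mem_span {i : ℕ} (hi : i ∈ Icc 1 n) :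
    π (X7 n i) * π (Y7 n i) ∈ Submodule.span (baseSubalgebra n ξ) (Set.range fun q =>
      bimonomial (Icc 1 n) (fun k => π (X7 n k)) (fun k => π (Y7 n k)) q 0) := by
  set M := Submodule.span (baseSubalgebra n ξ)
    (Set.range fun q => bimonomial (Icc 1 n) (fun k => π (X7 n k)) (fun k => π (Y7 n k)) q 0)
  have smul_mem : ∀ f q, π f ∈ baseSubalgebra n ξ →
      π f * bimonomial (Icc 1 n) (fun k => π (X7 n k)) (fun k => π (Y7 n k)) q 0 ∈ M :=
    fun f q hf => Submodule.smul_mem _ (⟨π f, hf⟩ : baseSubalgebra n ξ)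
      (Submodule.subset_span ⟨q, rfl⟩)
  obtain ⟨h1, h2⟩ := mem_Icc.mp hi
  rw [← map_mul, mk_X7_mul_Y7 n ξ h1 h2]
  refine add_mem ?_ ?_
  · rw [map_mul, map_pow, mk_X7_pow]
    exact smul_mem _ _ (mk_F7_mem_baseSubalgebra n ξ i)
  · rw [mul_assoc, map_mul, map_mul, map_pow _ (X7 n (i + 1)), ← pow_one (π (X7 n (i - 1))),
      mk_X7_pow, mk_X7_pow, ← add_zero (0 : ℕ → ℕ), ← bimonomial_add]
    exact smul_mem _ _ (by rw [map_pow]; exact pow_mem (mk_F7_mem_baseSubalgebra n ξ _) _)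

lemma adjoin_mk_X7_Y7_eq_top :
    Algebra.adjoin (baseSubalgebra n ξ)
      ((fun k => π (X7 n k)) '' Icc 1 n ∪ (fun k => π (Y7 n k)) '' Icc 1 n) = ⊤ := by
  rw [eq_top_iff]
  rintro z -
  obtain ⟨f, rfl⟩ := Ideal.Quotient.mk_surjective z
  induction f using MvPolynomial.induction_on with
  | C a =>
    rw [eq_intCast MvPolynomial.C a, map_intCast]
    exact intCast_mem _ a
  | add f g hf hg => rw [map_add]; exact add_mem hf hg
  | mul_X f v hf =>
    rw [map_mul]
    refine mul_mem hf ?_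
    rcases v with j | j | j
    · rw [← F7_succ]
      exact Subalgebra.algebraMap_mem _ (⟨_, mk_F7_mem_baseSubalgebra n ξ _⟩ : baseSubalgebra n ξ)
    · rw [← X7_succ]
      exact Algebra.subset_adjoin (Or.inl ⟨j + 1, by simp, rfl⟩)
    · rw [← Y7_succ]
      exact Algebra.subset_adjoin (Or.inr ⟨j + 1, by simp, rfl⟩)

end QuotientRing

theorem stmt7_general (n : ℕ) (ξ : ℕ → ℤ) :
    Submodule.span (Algebra.adjoin ℤ
        {r : P7 n ⧸ I7 n ξ | ∃ i, 1 ≤ i ∧ i ≤ n ∧ r = Ideal.Quotient.mk (I7 n ξ) (F7 n i)})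
      {r : P7 n ⧸ I7 n ξ | ∃ p m : ℕ → ℕ, (∀ i, p i * m i = 0) ∧
        r = Ideal.Quotient.mk (I7 n ξ)
          (∏ i ∈ Finset.Icc 1 n, X7 n i ^ p i * Y7 n i ^ m i)} = ⊤ := by
  have := span_reducedBimonomials_eq_top (Icc 1 n) _ _ (adjoin_mk_X7_Y7_eq_top n ξ)
    fun i hi => mk_X7_mul_mk_Y7_mem_span n ξ hi
  simpa only [reducedBimonomials, bimonomial, map_prod, map_mul, map_pow] using this

theorem stmt7 (n : ℕ) (ξ : ℕ → ℤ) (hn : 2 ≤ n)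
    (hheight : ∀ k, 2 ≤ k → k ≤ n → |ξ k - ξ (k - 1)| = 1)
    (hlo : ξ 0 = ξ 2) (hhi : ξ (n + 1) = ξ (n - 1)) :
    Submodule.span (Algebra.adjoin ℤ
        {r : P7 n ⧸ I7 n ξ | ∃ i, 1 ≤ i ∧ i ≤ n ∧ r = Ideal.Quotient.mk (I7 n ξ) (F7 n i)})
      {r : P7 n ⧸ I7 n ξ | ∃ p m : ℕ → ℕ, (∀ i, p i * m i = 0) ∧
        r = Ideal.Quotient.mk (I7 n ξ)
          (∏ i ∈ Finset.Icc 1 n, X7 n i ^ p i * Y7 n i ^ m i)} = ⊤ :=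
  stmt7_general n ξ
end
end

section
/- Let (r, p, m) and (r′, p′, m′) be triples in ℕ^n × ℕ^n × ℕ^n with p_i·m_i = 0 and p′_i·m′_i = 0 for all 1 ≤ i ≤ n. Then W(r, p, m) = W(r′, p′, m′) in P^+_ξ if and only if (r, p, m) = (r′, p′, m′). -/
/-! At vertex `j`, with `ξ (j + 1) = ξ j ± 1`, the generator `ω_{j,ξ(j+1)}` occurs in
`W(r, p, m)` with multiplicity `r_j + p_j + (1 - d_{j-1}) m_{j-1}`, and the other neighbour
`ω_{j,2ξ(j)-ξ(j+1)}` with multiplicity `r_j + m_j`. Since `p_j m_j = 0`, these two numbers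
determine `r_j`, `p_j` and `m_j`, so induction on `j` recovers `(r, p, m)` from `W(r, p, m)`. -/

open Finset

noncomputable section

/-- The generator `ω_{i,a}` of the free abelian monoid `𝒫⁺_ξ`, realized inside the free
abelian monoid `Multiset (ℕ × ℤ)` on all pairs `(i, a)`. -/
def om (i : ℕ) (a : ℤ) : Multiset (ℕ × ℤ) := {(i, a)}

/-- The element `W(r,p,m) = ∏_i f_i^{r_i} ω_{i,ξ(i+1)}^{p_i}
(ω_{i,ξ(i+1)+2}^{δ} ω_{i,ξ(i+1)-2}^{δ'} ω_{i+1,ξ(i+2)}^{1-d_i})^{m_i}` of `𝒫⁺_ξ`,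
where `f_i = ω_{i,ξ(i)+1} ω_{i,ξ(i)-1}` (written additively). -/
def W8 (n : ℕ) (ξ : ℕ → ℤ) (r p m : ℕ → ℕ) : Multiset (ℕ × ℤ) :=
  ∑ i ∈ Finset.Icc 1 n,
    (r i • (om i (ξ i + 1) + om i (ξ i - 1)) + p i • om i (ξ (i + 1))
      + m i • ((if ξ i = ξ (i + 1) + 1 then om i (ξ (i + 1) + 2) else 0)
          + (if ξ i = ξ (i + 1) - 1 then om i (ξ (i + 1) - 2) else 0)
          + (1 - dd n ξ i) • om (i + 1) (ξ (i + 2))))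

lemma Nat.eq_of_add_eq_add_of_mul_eq_zero {r p m r' p' m' : ℕ} (h : p * m = 0) (h' : p' * m' = 0)
    (hp : r + p = r' + p') (hm : r + m = r' + m') : r = r' ∧ p = p' ∧ m = m' := by
  rcases Nat.mul_eq_zero.mp h with h | h <;> rcases Nat.mul_eq_zero.mp h' with h' | h' <;> omega

lemma abs_sub_succ_eq_one {n : ℕ} {ξ : ℕ → ℤ} (hn : 2 ≤ n)
    (hheight : ∀ k, 2 ≤ k → k ≤ n → |ξ k - ξ (k - 1)| = 1) (hhi : ξ (n + 1) = ξ (n - 1))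
    {j : ℕ} (hj : j ∈ Icc 1 n) : |ξ (j + 1) - ξ j| = 1 := by
  obtain ⟨hj1, hjn⟩ := mem_Icc.mp hj
  rcases hjn.lt_or_eq with hjn | rfl
  · simpa using hheight (j + 1) (by omega) (by omega)
  · rw [hhi, abs_sub_comm]
    exact hheight j hn le_rfl

namespace W8

variable {n : ℕ} {ξ : ℕ → ℤ} {r p m r' p' m' : ℕ → ℕ}

def localTerm (ξ : ℕ → ℤ) (r p m : ℕ → ℕ) (i : ℕ) : Multiset (ℕ × ℤ) :=
  r i • (om i (ξ i + 1) + om i (ξ i - 1)) + p i • om i (ξ (i + 1))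
    + m i • ((if ξ i = ξ (i + 1) + 1 then om i (ξ (i + 1) + 2) else 0)
      + (if ξ i = ξ (i + 1) - 1 then om i (ξ (i + 1) - 2) else 0))

def carryTerm (n : ℕ) (ξ : ℕ → ℤ) (m : ℕ → ℕ) (i : ℕ) : Multiset (ℕ × ℤ) :=
  m i • (1 - dd n ξ i) • om (i + 1) (ξ (i + 2))

lemma eq_sum_localTerm_add_sum_carryTerm :
    W8 n ξ r p m = ∑ i ∈ Icc 1 n, localTerm ξ r p m i + ∑ i ∈ Icc 1 n, carryTerm n ξ m i := by
  rw [← sum_add_distrib]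
  refine sum_congr rfl fun i _ => ?_
  simp only [localTerm, carryTerm, nsmul_add, add_assoc]

lemma count_localTerm_of_ne {i j : ℕ} (b : ℤ) (h : i ≠ j) :
    (localTerm ξ r p m i).count (j, b) = 0 := by
  simp [localTerm, om, apply_ite (Multiset.count (j, b)), Ne.symm h]

lemma count_carryTerm_of_ne {i j : ℕ} (b : ℤ) (h : i + 1 ≠ j) :
    (carryTerm n ξ m i).count (j, b) = 0 := by
  simp [carryTerm, om, Ne.symm h]

lemma count_eq_count_localTerm_add_count_carryTerm (hm0 : m 0 = 0) {j : ℕ} (hj : j ∈ Icc 1 n)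
    (b : ℤ) : (W8 n ξ r p m).count (j, b) =
      (localTerm ξ r p m j).count (j, b) + (carryTerm n ξ m (j - 1)).count (j, b) := by
  rw [eq_sum_localTerm_add_sum_carryTerm, Multiset.count_add, Multiset.count_sum',
    Multiset.count_sum', sum_eq_single j (fun i _ h => count_localTerm_of_ne b h)
      (fun h => absurd hj h)]
  congr 1
  refine sum_eq_single (j - 1) (fun i _ h => count_carryTerm_of_ne b (by omega)) fun h => ?_
  have : j - 1 = 0 := by simp only [mem_Icc] at hj h; omega
  simp [carryTerm, this, hm0]

lemma count_localTerm_succ {j : ℕ} (hξ : |ξ (j + 1) - ξ j| = 1) :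
    (localTerm ξ r p m j).count (j, ξ (j + 1)) = r j + p j := by
  rcases abs_eq zero_le_one |>.mp hξ with h | h <;>
    simp only [localTerm, om, Multiset.count_add, Multiset.count_nsmul, Multiset.count_singleton,
      Prod.mk.injEq, true_and, apply_ite (Multiset.count _), Multiset.count_zero] <;>
    split_ifs <;> omega

lemma count_localTerm_reflect {j : ℕ} (hξ : |ξ (j + 1) - ξ j| = 1) :
    (localTerm ξ r p m j).count (j, 2 * ξ j - ξ (j + 1)) = r j + m j := by
  rcases abs_eq zero_le_one |>.mp hξ with h | h <;>
    simp only [localTerm, om, Multiset.count_add, Multiset.count_nsmul, Multiset.count_singleton,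
      Prod.mk.injEq, true_and, apply_ite (Multiset.count _), Multiset.count_zero] <;>
    split_ifs <;> omega

lemma count_carryTerm_pred_reflect {j : ℕ} (hj : 1 ≤ j) (hξ : |ξ (j + 1) - ξ j| = 1) :
    (carryTerm n ξ m (j - 1)).count (j, 2 * ξ j - ξ (j + 1)) = 0 := by
  rcases abs_eq zero_le_one |>.mp hξ with h | h <;>
    simp [carryTerm, om, show j - 1 + 2 = j + 1 by omega, show j - 1 + 1 = j by omega] <;> omega

lemma coeff_eq_of_eq (hW : W8 n ξ r p m = W8 n ξ r' p' m') (hm0 : m 0 = 0) (hm0' : m' 0 = 0)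
    {j : ℕ} (hj : j ∈ Icc 1 n) (hξ : |ξ (j + 1) - ξ j| = 1)
    (hstd : p j * m j = 0) (hstd' : p' j * m' j = 0) (hprev : m (j - 1) = m' (j - 1)) :
    r j = r' j ∧ p j = p' j ∧ m j = m' j := by
  have hj1 : 1 ≤ j := (mem_Icc.mp hj).1
  have hsucc := congrArg (Multiset.count (j, ξ (j + 1))) hW
  have hreflect := congrArg (Multiset.count (j, 2 * ξ j - ξ (j + 1))) hW
  rw [count_eq_count_localTerm_add_count_carryTerm hm0 hj,
    count_eq_count_localTerm_add_count_carryTerm hm0' hj] at hsucc hreflect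
  rw [count_localTerm_succ hξ, count_localTerm_succ hξ, carryTerm, carryTerm, hprev,
    Nat.add_right_cancel_iff] at hsucc
  rw [count_localTerm_reflect hξ, count_localTerm_reflect hξ,
    count_carryTerm_pred_reflect hj1 hξ, count_carryTerm_pred_reflect hj1 hξ] at hreflect
  exact Nat.eq_of_add_eq_add_of_mul_eq_zero hstd hstd' hsucc hreflect

end W8

theorem stmt8_general (n : ℕ) (ξ : ℕ → ℤ) (hn : 2 ≤ n)
    (hheight : ∀ k, 2 ≤ k → k ≤ n → |ξ k - ξ (k - 1)| = 1)
    (hhi : ξ (n + 1) = ξ (n - 1))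
    (r p m r' p' m' : ℕ → ℕ)
    (hr : ∀ i, i = 0 ∨ n < i → r i = 0) (hp : ∀ i, i = 0 ∨ n < i → p i = 0)
    (hm : ∀ i, i = 0 ∨ n < i → m i = 0)
    (hr' : ∀ i, i = 0 ∨ n < i → r' i = 0) (hp' : ∀ i, i = 0 ∨ n < i → p' i = 0)
    (hm' : ∀ i, i = 0 ∨ n < i → m' i = 0)
    (hstd : ∀ i, p i * m i = 0) (hstd' : ∀ i, p' i * m' i = 0) :
    W8 n ξ r p m = W8 n ξ r' p' m' ↔ (r = r' ∧ p = p' ∧ m = m') := by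
  refine ⟨fun hW => ?_, by rintro ⟨rfl, rfl, rfl⟩; rfl⟩
  have outside {i : ℕ} (hi : i = 0 ∨ n < i) : r i = r' i ∧ p i = p' i ∧ m i = m' i :=
    ⟨(hr i hi).trans (hr' i hi).symm, (hp i hi).trans (hp' i hi).symm,
      (hm i hi).trans (hm' i hi).symm⟩
  have agree (j : ℕ) : r j = r' j ∧ p j = p' j ∧ m j = m' j := by
    induction j with
    | zero => exact outside (Or.inl rfl)
    | succ j ih =>
      by_cases hj : j + 1 ≤ n
      · have hj' : j + 1 ∈ Icc 1 n := mem_Icc.mpr ⟨j.succ_pos, hj⟩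
        exact W8.coeff_eq_of_eq hW (hm 0 (Or.inl rfl)) (hm' 0 (Or.inl rfl)) hj'
          (abs_sub_succ_eq_one hn hheight hhi hj') (hstd _) (hstd' _) ih.2.2
      · exact outside (Or.inr (by omega))
  exact ⟨funext fun j => (agree j).1, funext fun j => (agree j).2.1,
    funext fun j => (agree j).2.2⟩

theorem stmt8 (n : ℕ) (ξ : ℕ → ℤ) (hn : 2 ≤ n)
    (hheight : ∀ k, 2 ≤ k → k ≤ n → |ξ k - ξ (k - 1)| = 1)
    (hlo : ξ 0 = ξ 2) (hhi : ξ (n + 1) = ξ (n - 1))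
    (r p m r' p' m' : ℕ → ℕ)
    (hr : ∀ i, i = 0 ∨ n < i → r i = 0) (hp : ∀ i, i = 0 ∨ n < i → p i = 0)
    (hm : ∀ i, i = 0 ∨ n < i → m i = 0)
    (hr' : ∀ i, i = 0 ∨ n < i → r' i = 0) (hp' : ∀ i, i = 0 ∨ n < i → p' i = 0)
    (hm' : ∀ i, i = 0 ∨ n < i → m' i = 0)
    (hstd : ∀ i, p i * m i = 0) (hstd' : ∀ i, p' i * m' i = 0) :
    W8 n ξ r p m = W8 n ξ r' p' m' ↔ (r = r' ∧ p = p' ∧ m = m') :=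
  stmt8_general n ξ hn hheight hhi r p m r' p' m' hr hp hm hr' hp' hm' hstd hstd'
end
end
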